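/- arXiv:2206.04944 — 6 statements merged into one kernel-verified Lean document; each statement's English description precedes it below -/
import Mathlib

section
/- For any finite-state transducer M that emits no output before reading any input (i.e., B(p)(ε) = ∅ for all initial states p), the Mealy machine M' produced by the subset construction subsetT satisfies B_Γ(M') = B_Γ(M). -/
open Classical

/-- The outputting behaviour associated to a set-valued behaviour: the partial function
defined exactly where the behaviour is nonempty, where it agrees with the behaviour. -/
noncomputable def outBeh {σ γ : Type} (f : List σ → Set γ) : List σ → Option (Set γ) :=
  fun w => if f w = ∅ then none else some (f w)

/-- A finite-state transducer: a nondeterministic machine reading input symbols from `σ`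
(or `ε`, encoded `none`) and possibly emitting output symbols from `γ`. -/
structure FST (Q : Type) (σ : Type) (γ : Type) where
  step : Q → Option σ → Option γ → Q → Prop
  I : Set Q
  F : Set Q

namespace FST

variable {Q σ γ : Type} (M : FST Q σ γ)

/-- One ε-transition (possibly with output). -/
def EpsStep (p q : Q) : Prop := ∃ g, M.step p none g q

/-- `q` is in the ε-closure of `p`. -/
def EpsCl (p q : Q) : Prop := Relation.ReflTransGen M.EpsStep p q

/-- ε-closure of a set of states. -/
def epsClSet (S : Set Q) : Set Q := {q | ∃ p ∈ S, M.EpsCl p q}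

/-- `Reads p w q`: from `p` the machine may reach `q` reading the input word `w`,
with ε-transitions interleaved anywhere. -/
inductive Reads : Q → List σ → Q → Prop
  | refl (p : Q) : Reads p [] p
  | eps {p q r : Q} {w : List σ} : M.EpsStep p q → Reads q w r → Reads p w r
  | cons {p q r : Q} {a : σ} {w : List σ} (g : Option γ) :
      M.step p (some a) g q → Reads q w r → Reads p (a :: w) r

/-- `B(p)(ε)`: outputs emittable from `p` by ε-transitions only. -/
def behNil (p : Q) : Set γ := {g | ∃ q r, M.EpsCl p q ∧ M.step q none (some g) r}

/-- The behaviour of state `p`: `B(p)(ε)` is `behNil p`, and `B(p)(w·a)` is the set of outputs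
emitted on the transition reading the final `a` or by ε-transitions immediately afterwards. -/
def beh (p : Q) (w : List σ) : Set γ :=
  {g | (w = [] ∧ g ∈ M.behNil p) ∨
    ∃ w' a, w = w' ++ [a] ∧ ∃ (g' : Option γ) (q r : Q),
      M.Reads p w' q ∧ M.step q (some a) g' r ∧ (some g = g' ∨ g ∈ M.behNil r)}

/-- The behaviour of the transducer: the union of the behaviours of its initial states. -/
def machineBeh (w : List σ) : Set γ := ⋃ i ∈ M.I, M.beh i w

/-- Transition function `T` of the subset construction `subsetT`. -/
def Tfun (S : Set Q) (a : σ) : Set Q :=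
  M.epsClSet {q | ∃ p ∈ S, ∃ g, M.step p (some a) g q}

/-- Output function `G` of the subset construction `subsetT`. -/
def Gfun (S : Set Q) (a : σ) : Set γ :=
  {g | ∃ p ∈ S, ∃ q, M.step p (some a) (some g) q} ∪
  {g | ∃ p ∈ M.Tfun S a, ∃ q ∈ M.Tfun S a, M.step p none (some g) q}

/-- Iterating `T` along a word. -/
def runT (S : Set Q) (w : List σ) : Set Q := w.foldl M.Tfun S

/-- The behaviour of the state `S` of the Mealy machine `subsetT M`:
nothing is emitted on the empty word, and on `w·a` the output is `G(runT S w, a)`. -/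
def subsetBeh (S : Set Q) (w : List σ) : Set γ :=
  {g | ∃ w' a, w = w' ++ [a] ∧ g ∈ M.Gfun (M.runT S w') a}

/-- Transition function `T'` of the modified subset construction `subsetTC`,
which adds the initial closure to every transition target. -/
def TCfun (S : Set Q) (a : σ) : Set Q := M.Tfun S a ∪ M.epsClSet M.I

/-- Iterating `T'` along a word. -/
def runTC (S : Set Q) (w : List σ) : Set Q := w.foldl M.TCfun S

/-- The behaviour of the Mealy machine computed by `subsetTC`, from its initial state `ε(I)`. -/
def subsetTCBeh (w : List σ) : Set γ :=
  {g | ∃ w' a, w = w' ++ [a] ∧ g ∈ M.Gfun (M.runTC (M.epsClSet M.I) w') a}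

end FST

/-! `runT` started at an ε-closure `ε(X)` is the set of states reachable from `X` along the word
read so far. Since `G(S, a)` collects exactly the outputs of the last `a`-transition out of `S` and
of the ε-transitions following it, `G(runT ε(I) w, a)` is `B_M(w·a)`. On the empty word the Mealy
machine is silent, and so is `M`, whose initial states emit nothing before reading. -/

namespace FST

variable {Q σ γ : Type} (M : FST Q σ γ)

theorem EpsCl.reads {p q r : Q} {w : List σ} (hpq : M.EpsCl p q) (hqr : M.Reads q w r) :
    M.Reads p w r := by
  induction hpq using Relation.ReflTransGen.head_induction_on with
  | refl => exact hqr
  | head hstep _ ih => exact .eps hstep ih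

theorem reads_nil_iff {p q : Q} : M.Reads p [] q ↔ M.EpsCl p q := by
  refine ⟨fun h => ?_, fun h => h.reads M (.refl q)⟩
  generalize hw : ([] : List σ) = w at h
  induction h with
  | refl => exact .refl
  | eps hstep _ ih => exact .head hstep (ih hw)
  | cons => cases hw

theorem reads_cons_iff {p r : Q} {a : σ} {w : List σ} :
    M.Reads p (a :: w) r ↔
      ∃ q q' g, M.EpsCl p q ∧ M.step q (some a) g q' ∧ M.Reads q' w r := by
  refine ⟨fun h => ?_, fun ⟨q, q', g, hcl, hstep, hr⟩ => hcl.reads M (.cons g hstep hr)⟩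
  generalize hw : a :: w = v at h
  induction h with
  | refl => cases hw
  | eps hstep _ ih =>
    obtain ⟨q, q', g, hcl, hs, hr⟩ := ih hw
    exact ⟨q, q', g, .head hstep hcl, hs, hr⟩
  | cons g hstep hr =>
    cases hw
    exact ⟨_, _, g, .refl, hstep, hr⟩

theorem runT_epsClSet (X : Set Q) (w : List σ) :
    M.runT (M.epsClSet X) w = {q | ∃ p ∈ X, M.Reads p w q} := by
  induction w generalizing X with
  | nil => ext q; simp [runT, epsClSet, reads_nil_iff]
  | cons a w ih =>
    change M.runT (M.epsClSet {q | ∃ p ∈ M.epsClSet X, ∃ g, M.step p (some a) g q}) w = _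
    rw [ih]
    ext r
    simp only [epsClSet, reads_cons_iff, Set.mem_ofPred_eq]
    constructor
    · rintro ⟨q', ⟨q, ⟨p, hp, hcl⟩, g, hstep⟩, hr⟩
      exact ⟨p, hp, q, q', g, hcl, hstep, hr⟩
    · rintro ⟨p, hp, q, q', g, hcl, hstep, hr⟩
      exact ⟨q', ⟨q, ⟨p, hp, hcl⟩, g, hstep⟩, hr⟩

theorem beh_nil (p : Q) : M.beh p [] = M.behNil p := by
  ext g; simp [beh]

theorem mem_beh_append_singleton {p : Q} {w : List σ} {a : σ} {g : γ} :
    g ∈ M.beh p (w ++ [a]) ↔ ∃ (g' : Option γ) (q r : Q),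
      M.Reads p w q ∧ M.step q (some a) g' r ∧ (some g = g' ∨ g ∈ M.behNil r) := by
  simp [beh, List.append_singleton_inj]

theorem mem_Gfun_runT_epsClSet {X : Set Q} {w : List σ} {a : σ} {g : γ} :
    g ∈ M.Gfun (M.runT (M.epsClSet X) w) a ↔ ∃ p ∈ X, g ∈ M.beh p (w ++ [a]) := by
  rw [runT_epsClSet]
  simp only [Gfun, Tfun, epsClSet, mem_beh_append_singleton, behNil, Set.mem_union,
    Set.mem_ofPred_eq]
  constructor
  · rintro (⟨q, ⟨p, hp, hr⟩, r, hstep⟩ | ⟨s, ⟨r, ⟨q, ⟨p, hp, hr⟩, g', hstep⟩, hcl⟩, t, -, hout⟩)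
    · exact ⟨p, hp, some g, q, r, hr, hstep, .inl rfl⟩
    · exact ⟨p, hp, g', q, r, hr, hstep, .inr ⟨s, t, hcl, hout⟩⟩
  · rintro ⟨p, hp, g', q, r, hr, hstep, rfl | ⟨s, t, hcl, hout⟩⟩
    · exact .inl ⟨q, ⟨p, hp, hr⟩, r, hstep⟩
    · have hrT : r ∈ {r | ∃ q ∈ {q | ∃ p ∈ X, M.Reads p w q}, ∃ g, M.step q (some a) g r} :=
        ⟨q, ⟨p, hp, hr⟩, g', hstep⟩
      exact .inr ⟨s, ⟨r, hrT, hcl⟩, t, ⟨r, hrT, hcl.tail ⟨some g, hout⟩⟩, hout⟩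

theorem subsetBeh_nil (S : Set Q) : M.subsetBeh S [] = ∅ := by
  ext g; simp [subsetBeh]

theorem subsetBeh_append_singleton (S : Set Q) (w : List σ) (a : σ) :
    M.subsetBeh S (w ++ [a]) = M.Gfun (M.runT S w) a := by
  ext g; simp [subsetBeh, List.append_singleton_inj]

end FST

/-- For any FST `M` that emits no output before reading any input,
the Mealy machine produced by the subset construction `subsetT` (whose initial state is
`ε(I)`) has the same outputting behaviour as `M`. -/
theorem stmt3 {Q σ γ : Type} (M : FST Q σ γ) (h : ∀ p ∈ M.I, M.behNil p = ∅) :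
    outBeh (M.subsetBeh (M.epsClSet M.I)) = outBeh M.machineBeh := by
  congr 1
  funext w
  rcases List.eq_nil_or_concat' w with rfl | ⟨w, a, rfl⟩
  · simp +contextual [FST.subsetBeh_nil, FST.machineBeh, FST.beh_nil, h]
  · ext g
    simp [FST.subsetBeh_append_singleton, FST.machineBeh, FST.mem_Gfun_runT_epsClSet]
end

section
/- In a complete Mealy machine, two states p and q have the same outputting behaviour if and only if they have the same behaviour, i.e., if and only if for every input word s and symbol σ, the output emitted on the last symbol when reading sσ from p equals that emitted when reading sσ from q. -/
/-- A Mealy machine with (possibly partial) transition and output functions, bundled as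
`step : Q → σ → Option (Q × Option Λ)`: `step p a = some (q, o)` means that from `p` reading `a`
the machine moves to `q` emitting `o` (with `o = none` meaning no output). -/
structure Mealy (Q : Type) (σ : Type) (Λ : Type) where
  step : Q → σ → Option (Q × Option Λ)
  init : Q

namespace Mealy

variable {Q σ Λ : Type} (M : Mealy Q σ Λ)

/-- A Mealy machine is complete when its transition/output functions are total. -/
def Complete : Prop := ∀ q a, (M.step q a).isSome

/-- `O(p, w)`: the output emitted on the last symbol when reading `w` from `p`;
`none` if `w` is empty or the (partial) run is undefined, `some o` otherwise. -/
def outFrom : Q → List σ → Option (Option Λ)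
  | _, [] => none
  | p, [a] => (M.step p a).map Prod.snd
  | p, a :: b :: w => (M.step p a).bind fun x => outFrom x.1 (b :: w)

/-- Output on the last symbol when reading a word from the initial state. -/
def out (w : List σ) : Option (Option Λ) := M.outFrom M.init w

/-- The outputting behaviour of state `p`: the partial function defined on exactly those words
after which a (nonempty) output is emitted, mapping them to that output. -/
def outBehFrom (p : Q) : List σ → Option Λ := fun w =>
  match M.outFrom p w with
  | some (some o) => some o
  | _ => none

/-- The outputting behaviour of the machine. -/
def outputting : List σ → Option Λ := M.outBehFrom M.init

end Mealy

/-- For a Mealy machine whose output alphabet consists of sets of `γ` (`Λ ⊆ P(Γ)`),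
the set of output symbols emitted after reading `w` (empty if no output). -/
def Mealy.behSet {Q σ γ : Type} (M : Mealy Q σ (Set γ)) (w : List σ) : Set γ :=
  {g | ∃ S : Set γ, M.out w = some (some S) ∧ g ∈ S}

/-- An isomorphism of Mealy machines: a bijection on states preserving the initial state and
the transition/output structure. -/
structure MealyIso {Q Q' σ Λ : Type} (M : Mealy Q σ Λ) (N : Mealy Q' σ Λ) where
  toEquiv : Q ≃ Q'
  init_eq : toEquiv M.init = N.init
  step_eq : ∀ q a, N.step (toEquiv q) a = (M.step q a).map (fun x => (toEquiv x.1, x.2))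

namespace Mealy

variable {Q σ Λ : Type} (M : Mealy Q σ Λ)

theorem outFrom_cons_of_ne_nil (p : Q) (a : σ) {w : List σ} (hw : w ≠ []) :
    M.outFrom p (a :: w) = (M.step p a).bind fun x => M.outFrom x.1 w := by
  obtain ⟨b, w, rfl⟩ := List.exists_cons_of_ne_nil hw
  rfl

theorem outFrom_append_singleton_isSome (hM : M.Complete) (p : Q) (s : List σ) (a : σ) :
    (M.outFrom p (s ++ [a])).isSome := by
  induction s generalizing p with
  | nil =>
    obtain ⟨x, hx⟩ := Option.isSome_iff_exists.mp (hM p a)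
    simp [outFrom, hx]
  | cons b s ih =>
    obtain ⟨x, hx⟩ := Option.isSome_iff_exists.mp (hM p b)
    rw [List.cons_append, outFrom_cons_of_ne_nil M p b (by simp), hx]
    exact ih x.1

theorem outBehFrom_eq_join (p : Q) (w : List σ) : M.outBehFrom p w = (M.outFrom p w).join := by
  unfold outBehFrom
  rcases M.outFrom p w with _ | _ | _ <;> rfl

theorem outBehFrom_nil (p : Q) : M.outBehFrom p [] = none := rfl

/-- `Option.join` only merges `none` (run undefined) with `some none` (no output), so nothing is
lost once both runs are defined. -/
theorem outBehFrom_eq_iff_outFrom_eq {p q : Q} {w : List σ} (hp : (M.outFrom p w).isSome)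
    (hq : (M.outFrom q w).isSome) :
    M.outBehFrom p w = M.outBehFrom q w ↔ M.outFrom p w = M.outFrom q w := by
  obtain ⟨x, hx⟩ := Option.isSome_iff_exists.mp hp
  obtain ⟨y, hy⟩ := Option.isSome_iff_exists.mp hq
  simp [outBehFrom_eq_join, hx, hy]

end Mealy

/-- In a complete Mealy machine, two states have the same outputting
behaviour iff they have the same behaviour, i.e. iff for every input word `s` and symbol `a`
the output emitted on the last symbol when reading `s·a` from `p` equals that from `q`. -/
theorem stmt8 {Q σ Λ : Type} (M : Mealy Q σ Λ) (hM : M.Complete) (p q : Q) :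
    M.outBehFrom p = M.outBehFrom q ↔
      ∀ (s : List σ) (a : σ), M.outFrom p (s ++ [a]) = M.outFrom q (s ++ [a]) := by
  have key (s : List σ) (a : σ) :=
    M.outBehFrom_eq_iff_outFrom_eq (M.outFrom_append_singleton_isSome hM p s a)
      (M.outFrom_append_singleton_isSome hM q s a)
  constructor
  · intro h s a
    exact (key s a).1 (congrFun h _)
  · intro h
    funext w
    rcases List.eq_nil_or_concat' w with rfl | ⟨s, a, rfl⟩
    · rw [M.outBehFrom_nil, M.outBehFrom_nil]
    · exact (key s a).2 (h s a)
end

section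
/- For every Mealy machine, the minimal complete Mealy machine with the same outputting behaviour is unique up to isomorphism. -/
/-!
A minimal complete machine has only reachable states, since otherwise its reachable part would
be smaller, and no two of its states have the same output function `outFrom`, since otherwise
merging them would be smaller. Equality of output functions is a bisimulation, so in a machine
where every state is reachable the output functions of its states are exactly the residuals of
the machine's behaviour; completeness makes that behaviour determined by the outputting one.
Two such machines are then identified state by state through their output functions, and this
identification respects the transitions.
-/

namespace Mealy

variable {Q Q₁ Q₂ σ Λ : Type}

section Bisimulation

variable (N₁ : Mealy Q₁ σ Λ) (N₂ : Mealy Q₂ σ Λ)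

def IsBisimulation (R : Q₁ → Q₂ → Prop) : Prop :=
  ∀ p q, R p q → ∀ a, Option.Rel (fun x y => R x.1 y.1 ∧ x.2 = y.2) (N₁.step p a) (N₂.step q a)

variable {N₁ N₂}

theorem IsBisimulation.outFrom_eq {R : Q₁ → Q₂ → Prop} (hR : IsBisimulation N₁ N₂ R)
    {p : Q₁} {q : Q₂} (h : R p q) : N₁.outFrom p = N₂.outFrom q := by
  funext w
  induction w generalizing p q with
  | nil => rfl
  | cons a w ih =>
    have hstep := hR p q h a
    cases w with
    | nil =>
      simp only [outFrom]
      generalize N₁.step p a = s₁, N₂.step q a = s₂ at hstep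
      cases hstep with
      | none => rfl
      | some hxy => simp [hxy.2]
    | cons b w =>
      simp only [outFrom]
      generalize N₁.step p a = s₁, N₂.step q a = s₂ at hstep
      cases hstep with
      | none => rfl
      | some hxy => exact ih hxy.1

variable (N₁ N₂)

theorem isBisimulation_outFrom_eq :
    IsBisimulation N₁ N₂ (fun p q => N₁.outFrom p = N₂.outFrom q) := by
  intro p q h a
  have hsnd : (N₁.step p a).map Prod.snd = (N₂.step q a).map Prod.snd := congrFun h [a]
  cases hp : N₁.step p a with
  | none => cases hq : N₂.step q a <;> simp_all
  | some x =>
    cases hq : N₂.step q a with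
    | none => simp_all
    | some y =>
      refine .some ⟨funext fun w => ?_, by simpa [hp, hq] using hsnd⟩
      cases w with
      | nil => rfl
      | cons b w => simpa [outFrom, hp, hq] using congrFun h (a :: b :: w)

end Bisimulation

theorem outBehFrom_congr {N₁ : Mealy Q₁ σ Λ} {N₂ : Mealy Q₂ σ Λ} {p : Q₁} {q : Q₂}
    (h : N₁.outFrom p = N₂.outFrom q) : N₁.outBehFrom p = N₂.outBehFrom q := by
  funext w
  simp only [outBehFrom, h]

theorem Complete.outFrom_isSome {N : Mealy Q σ Λ} (hc : N.Complete) (p : Q) {w : List σ}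
    (hw : w ≠ []) : (N.outFrom p w).isSome := by
  induction w generalizing p with
  | nil => exact absurd rfl hw
  | cons a w ih =>
    obtain ⟨x, hx⟩ := Option.isSome_iff_exists.1 (hc p a)
    cases w with
    | nil => simp [outFrom, hx]
    | cons b w => simpa [outFrom, hx] using ih x.1 (List.cons_ne_nil b w)

theorem outFrom_eq_of_outBehFrom_eq {N₁ : Mealy Q₁ σ Λ} {N₂ : Mealy Q₂ σ Λ}
    (hc₁ : N₁.Complete) (hc₂ : N₂.Complete) {p : Q₁} {q : Q₂}
    (h : N₁.outBehFrom p = N₂.outBehFrom q) : N₁.outFrom p = N₂.outFrom q := by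
  funext w
  rcases eq_or_ne w [] with rfl | hw
  · rfl
  obtain ⟨x, hx⟩ := Option.isSome_iff_exists.1 (hc₁.outFrom_isSome p hw)
  obtain ⟨y, hy⟩ := Option.isSome_iff_exists.1 (hc₂.outFrom_isSome q hw)
  have hxy := congrFun h w
  simp only [outBehFrom, hx, hy] at hxy ⊢
  cases x <;> cases y <;> simp_all

section Merge

variable [DecidableEq Q] {p q : Q}

def redirect (hpq : p ≠ q) (r : Q) : {r : Q // r ≠ q} :=
  if h : r = q then ⟨p, hpq⟩ else ⟨r, h⟩

theorem apply_redirect {α : Type} {F : Q → α} (hF : F p = F q) (hpq : p ≠ q) (r : Q) :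
    F (redirect hpq r).1 = F r := by
  unfold redirect
  split_ifs with h
  · rw [hF, h]
  · rfl

def merge (N : Mealy Q σ Λ) (hpq : p ≠ q) : Mealy {r : Q // r ≠ q} σ Λ where
  step r a := (N.step r.1 a).map fun x => (redirect hpq x.1, x.2)
  init := redirect hpq N.init

variable {N : Mealy Q σ Λ} (hpq : p ≠ q)

theorem Complete.merge (hc : N.Complete) : (N.merge hpq).Complete := fun r a => by
  simpa [Mealy.merge] using hc r.1 a

theorem outFrom_merge (h : N.outFrom p = N.outFrom q) (r : {r : Q // r ≠ q}) :
    (N.merge hpq).outFrom r = N.outFrom r.1 := by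
  refine IsBisimulation.outFrom_eq (R := fun r s => N.outFrom r.1 = N.outFrom s) ?_ rfl
  intro r s hrs a
  have hstep := isBisimulation_outFrom_eq N N r.1 s hrs a
  simp only [Mealy.merge]
  generalize N.step r.1 a = s₁, N.step s a = s₂ at hstep
  cases hstep with
  | none => exact .none
  | some hxy => exact .some ⟨(apply_redirect h hpq _).trans hxy.1, hxy.2⟩

theorem outputting_merge (h : N.outFrom p = N.outFrom q) :
    (N.merge hpq).outputting = N.outputting :=
  outBehFrom_congr ((outFrom_merge hpq h _).trans (apply_redirect h hpq N.init))

end Merge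

section Reachable

variable (N : Mealy Q σ Λ)

inductive Reachable : Q → Prop
  | init : Reachable N.init
  | step {p : Q} {a : σ} {x : Q × Option Λ} : Reachable p → N.step p a = some x → Reachable x.1

def reachablePart : Mealy {p : Q // N.Reachable p} σ Λ where
  step r a := (N.step r.1 a).pmap (fun x hx => (⟨x.1, r.2.step hx⟩, x.2)) fun _ h => h
  init := ⟨N.init, .init⟩

variable {N}

theorem Complete.reachablePart (hc : N.Complete) : N.reachablePart.Complete := fun r a => by
  simpa [Mealy.reachablePart] using hc r.1 a

theorem outFrom_reachablePart (r : {p : Q // N.Reachable p}) :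
    N.reachablePart.outFrom r = N.outFrom r.1 := by
  refine IsBisimulation.outFrom_eq (R := fun r s => r.1 = s) ?_ rfl
  rintro r _ rfl a
  cases h : N.step r.1 a <;> simp [Mealy.reachablePart, h]

theorem outputting_reachablePart : N.reachablePart.outputting = N.outputting :=
  outBehFrom_congr (outFrom_reachablePart _)

end Reachable

section Isomorphism

variable {N₁ : Mealy Q₁ σ Λ} {N₂ : Mealy Q₂ σ Λ}

theorem Reachable.exists_outFrom_eq (hinit : N₁.outFrom N₁.init = N₂.outFrom N₂.init)
    {p : Q₁} (hp : N₁.Reachable p) : ∃ q, N₂.outFrom q = N₁.outFrom p := by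
  induction hp with
  | init => exact ⟨N₂.init, hinit.symm⟩
  | @step p a x _ hx ih =>
    obtain ⟨q, hq⟩ := ih
    have hstep := isBisimulation_outFrom_eq N₁ N₂ p q hq.symm a
    rw [hx] at hstep
    generalize N₂.step q a = s₂ at hstep
    cases hstep with
    | some hxy => exact ⟨_, hxy.1.symm⟩

theorem range_outFrom_eq (hinit : N₁.outFrom N₁.init = N₂.outFrom N₂.init)
    (hr₁ : ∀ p, N₁.Reachable p) (hr₂ : ∀ q, N₂.Reachable q) :
    Set.range N₁.outFrom = Set.range N₂.outFrom := by
  apply Set.Subset.antisymm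
  · rintro _ ⟨p, rfl⟩
    exact (hr₁ p).exists_outFrom_eq hinit
  · rintro _ ⟨q, rfl⟩
    exact (hr₂ q).exists_outFrom_eq hinit.symm

theorem step_apply_eq_of_outFrom_apply (hi₂ : Function.Injective N₂.outFrom) {f : Q₁ → Q₂}
    (hf : ∀ p, N₂.outFrom (f p) = N₁.outFrom p) (p : Q₁) (a : σ) :
    N₂.step (f p) a = (N₁.step p a).map fun x => (f x.1, x.2) := by
  have hstep := isBisimulation_outFrom_eq N₂ N₁ (f p) p (hf p) a
  generalize N₂.step (f p) a = s₂, N₁.step p a = s₁ at hstep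
  cases hstep with
  | none => rfl
  | some hxy => exact congrArg some (Prod.ext (hi₂ (hxy.1.trans (hf _).symm)) hxy.2)

def _root_.MealyIso.ofOutFrom (e : Q₁ ≃ Q₂) (he : ∀ p, N₂.outFrom (e p) = N₁.outFrom p)
    (hi₂ : Function.Injective N₂.outFrom) (hinit : N₁.outFrom N₁.init = N₂.outFrom N₂.init) :
    MealyIso N₁ N₂ where
  toEquiv := e
  init_eq := hi₂ ((he _).trans hinit)
  step_eq := step_apply_eq_of_outFrom_apply hi₂ he

theorem nonempty_mealyIso_of_reachable_of_injective
    (hinit : N₁.outFrom N₁.init = N₂.outFrom N₂.init)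
    (hr₁ : ∀ p, N₁.Reachable p) (hr₂ : ∀ q, N₂.Reachable q)
    (hi₁ : Function.Injective N₁.outFrom) (hi₂ : Function.Injective N₂.outFrom) :
    Nonempty (MealyIso N₁ N₂) :=
  let e : Q₁ ≃ Q₂ := (Equiv.ofInjective _ hi₁).trans
    ((Equiv.setCongr (range_outFrom_eq hinit hr₁ hr₂)).trans (Equiv.ofInjective _ hi₂).symm)
  ⟨.ofOutFrom e (fun _ => Equiv.apply_ofInjective_symm hi₂ _) hi₂ hinit⟩

end Isomorphism

def IsMinimal [Fintype Q] (N : Mealy Q σ Λ) : Prop :=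
  ∀ (Q' : Type) [Fintype Q'] (N' : Mealy Q' σ Λ),
    N'.Complete → N'.outputting = N.outputting → Fintype.card Q ≤ Fintype.card Q'

variable [Fintype Q] {N : Mealy Q σ Λ}

theorem IsMinimal.outFrom_injective (hc : N.Complete) (hm : N.IsMinimal) :
    Function.Injective N.outFrom := by
  classical
  intro p q h
  by_contra hpq
  have hle := hm _ (N.merge hpq) (hc.merge hpq) (outputting_merge hpq h)
  have hlt := Fintype.card_subtype_lt (p := fun r => r ≠ q) (x := q) (by simp)
  omega

theorem IsMinimal.reachable (hc : N.Complete) (hm : N.IsMinimal) (p : Q) : N.Reachable p := by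
  classical
  by_contra hp
  have hle := hm _ N.reachablePart hc.reachablePart outputting_reachablePart
  have hlt := Fintype.card_subtype_lt hp
  omega

end Mealy

/-- For every Mealy machine `M`, the minimal complete Mealy machine with the
same outputting behaviour is unique up to isomorphism: any two complete machines with the
outputting behaviour of `M`, each having the fewest states among all such machines, are
isomorphic. -/
theorem stmt9 {Q σ Λ Q₁ Q₂ : Type} [Fintype Q₁] [Fintype Q₂] (M : Mealy Q σ Λ)
    (N₁ : Mealy Q₁ σ Λ) (N₂ : Mealy Q₂ σ Λ)
    (h₁c : N₁.Complete) (h₂c : N₂.Complete)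
    (h₁b : N₁.outputting = M.outputting) (h₂b : N₂.outputting = M.outputting)
    (h₁m : ∀ (Q' : Type) [Fintype Q'] (N : Mealy Q' σ Λ),
      N.Complete → N.outputting = M.outputting → Fintype.card Q₁ ≤ Fintype.card Q')
    (h₂m : ∀ (Q' : Type) [Fintype Q'] (N : Mealy Q' σ Λ),
      N.Complete → N.outputting = M.outputting → Fintype.card Q₂ ≤ Fintype.card Q') :
    Nonempty (MealyIso N₁ N₂) := by
  have hm₁ : N₁.IsMinimal := fun Q' _ N hc hb => h₁m Q' N hc (hb.trans h₁b)
  have hm₂ : N₂.IsMinimal := fun Q' _ N hc hb => h₂m Q' N hc (hb.trans h₂b)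
  exact Mealy.nonempty_mealyIso_of_reachable_of_injective
    (Mealy.outFrom_eq_of_outBehFrom_eq h₁c h₂c (h₁b.trans h₂b.symm))
    (hm₁.reachable h₁c) (hm₂.reachable h₂c) (hm₁.outFrom_injective h₁c) (hm₂.outFrom_injective h₂c)
end

section
/- The state-merging condition of Solovev (requiring orthogonality of all transition rules of two states with disjoint successor sets) is not necessary for behaviour-preserving merging: in the one-input-symbol Mealy machine with states p,q,r and transitions p→q, q→r, r→p all on the same input with no output, all three states have identical behaviour and the machine is equivalent to a one-state machine, yet no pair of transition rules is orthogonal. -/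
/-- The three-state cyclic Mealy machine over the single input symbol `()`:
`p →^σ q →^σ r →^σ p`, each transition emitting no output. -/
def cyc3 (γ : Type) : Mealy (Fin 3) Unit γ := ⟨fun i _ => some (i + 1, none), 0⟩

/-- The one-state Mealy machine with a σ self-loop and no output. -/
def loop1 (γ : Type) : Mealy Unit Unit γ := ⟨fun _ _ => some ((), none), ()⟩

/-- Orthogonality of transition rules (Boolean vectors over the input variables): some
position holds `1` in one rule and `0` in the other. -/
def Orthogonal {σ : Type} (X Y : σ → Bool) : Prop :=
  ∃ s, (X s = true ∧ Y s = false) ∨ (X s = false ∧ Y s = true)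

/-- The transition rule of the (unique) transition departing from state `i` of `cyc3`:
the vector of input symbols initiating it. -/
def ruleOf (γ : Type) (i : Fin 3) : Unit → Bool := fun s => ((cyc3 γ).step i s).isSome

namespace Mealy

variable {Q σ Λ : Type}

def Silent (M : Mealy Q σ Λ) : Prop := ∀ q a, ∃ q', M.step q a = some (q', none)

theorem Silent.outFrom_eq {M : Mealy Q σ Λ} (hM : M.Silent) :
    ∀ (p : Q) (w : List σ), M.outFrom p w = if w = [] then none else some none
  | _, [] => rfl
  | p, [a] => by
    obtain ⟨q, hq⟩ := hM p a
    simp [outFrom, hq]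
  | p, a :: b :: w => by
    obtain ⟨q, hq⟩ := hM p a
    simp [outFrom, hq, hM.outFrom_eq q (b :: w)]

theorem Silent.outFrom_eq_outFrom {M : Mealy Q σ Λ} (hM : M.Silent) (p q : Q) (w : List σ) :
    M.outFrom p w = M.outFrom q w := by
  rw [hM.outFrom_eq, hM.outFrom_eq]

theorem Silent.outputting_eq {M : Mealy Q σ Λ} (hM : M.Silent) :
    M.outputting = fun _ => none := by
  funext w
  by_cases hw : w = [] <;> simp [outputting, outBehFrom, hM.outFrom_eq, hw]

end Mealy

theorem Orthogonal.irrefl {σ : Type} (X : σ → Bool) : ¬ Orthogonal X X := by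
  rintro ⟨s, ⟨h₁, h₂⟩ | ⟨h₁, h₂⟩⟩ <;> simp_all

theorem cyc3_silent (γ : Type) : (cyc3 γ).Silent := fun i _ => ⟨i + 1, rfl⟩

theorem loop1_silent (γ : Type) : (loop1 γ).Silent := fun _ _ => ⟨(), rfl⟩

theorem ruleOf_eq (γ : Type) (i j : Fin 3) : ruleOf γ i = ruleOf γ j := rfl

/-- Solovev's orthogonality condition is not necessary for
behaviour-preserving merging: in the cyclic machine `cyc3`, all three states have identical
behaviour and the machine is equivalent to the one-state machine `loop1`, yet no pair of
transition rules is orthogonal. -/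
theorem stmt10 (γ : Type) :
    (∀ p q : Fin 3, ∀ w : List Unit, (cyc3 γ).outFrom p w = (cyc3 γ).outFrom q w) ∧
    (cyc3 γ).outputting = (loop1 γ).outputting ∧
    (∀ i j : Fin 3, ¬ Orthogonal (ruleOf γ i) (ruleOf γ j)) := by
  refine ⟨(cyc3_silent γ).outFrom_eq_outFrom, ?_, fun i j => ?_⟩
  · rw [(cyc3_silent γ).outputting_eq, (loop1_silent γ).outputting_eq]
  · rw [ruleOf_eq γ i j]
    exact Orthogonal.irrefl _
end

section
/- Let N be an NFA (or FST) with initial-state closure i, and let subsetTC be the subset construction modified so that T'(S,σ) = ε({q | ∃p∈S, p →^σ q}) ∪ {i}. Then the resulting Mealy machine M satisfies, for all words w ∈ Σ*, that the state reached after reading w is ⋃_{w'' suffix of w} ε(reach(i, w'')) ∪ {states of i}, i.e., the union of the subset-construction states reached from the initial closure on every suffix of w. -/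
/-! `T` commutes with arbitrary unions, and `T'` adds `ε(I) = runT ε(I) []` at every step.
Reading `w` from the right, the state after `w·a` is therefore `ε(I)` together with
`T(runT ε(I) w'', a) = runT ε(I) (w''·a)` for every suffix `w''` of `w`, and the suffixes of `w·a`
are exactly `[]` and these `w''·a`. -/

namespace FST

variable {Q σ γ : Type} (M : FST Q σ γ)

theorem Tfun_iUnion {ι : Sort*} (f : ι → Set Q) (a : σ) :
    M.Tfun (⋃ i, f i) a = ⋃ i, M.Tfun (f i) a := by
  ext q
  simp only [Tfun, epsClSet, Set.mem_iUnion, Set.mem_ofPred_eq]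
  constructor
  · rintro ⟨p, ⟨r, ⟨i, hr⟩, hstep⟩, hcl⟩
    exact ⟨i, p, ⟨r, hr, hstep⟩, hcl⟩
  · rintro ⟨i, p, ⟨r, hr, hstep⟩, hcl⟩
    exact ⟨p, ⟨r, ⟨i, hr⟩, hstep⟩, hcl⟩

@[simp]
theorem runT_nil (S : Set Q) : M.runT S [] = S := rfl

@[simp]
theorem runT_concat (S : Set Q) (w : List σ) (a : σ) :
    M.runT S (w ++ [a]) = M.Tfun (M.runT S w) a :=
  List.foldl_concat ..

@[simp]
theorem runTC_nil (S : Set Q) : M.runTC S [] = S := rfl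

@[simp]
theorem runTC_concat (S : Set Q) (w : List σ) (a : σ) :
    M.runTC S (w ++ [a]) = M.TCfun (M.runTC S w) a :=
  List.foldl_concat ..

end FST

/-- In the Mealy machine computed by `subsetTC` (whose initial state is the
closure `ε(I)`), the state reached after reading `w` is the union, over all suffixes `w''` of
`w`, of the subset-construction states reached from `ε(I)` on `w''` (the suffix `w'' = []`
contributing the states of `ε(I)` itself). -/
theorem stmt13 {Q σ γ : Type} (M : FST Q σ γ) (w : List σ) :
    M.runTC (M.epsClSet M.I) w =
      {q | ∃ w'' : List σ, w'' <:+ w ∧ q ∈ M.runT (M.epsClSet M.I) w''} := by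
  induction w using List.reverseRecOn with
  | nil => ext; simp
  | append_singleton w a ih =>
    have hsuffixes : {q | ∃ w'' : List σ, w'' <:+ w ∧ q ∈ M.runT (M.epsClSet M.I) w''} =
        ⋃ (w'' : List σ) (_ : w'' <:+ w), M.runT (M.epsClSet M.I) w'' := by
      ext; simp
    ext q
    simp [ih, hsuffixes, FST.TCfun, FST.Tfun_iUnion, List.suffix_concat_iff, or_and_right,
      exists_or, or_comm]
end

section
/- Applying the subset construction subsetTC (which adds the initial closure to every transition target) to an NFA N for e yields a DFA accepting exactly Σ*·L(e), i.e., it is equivalent to applying the standard subset construction to the NFA for (σ₁+…+σₙ)*·e. -/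
/-- The DFA computed by the modified subset construction `subsetTC` from an NFA (with
ε-transitions) `N`: the transition function adds the initial closure `ε(I)` to every
transition target, the initial state is `ε(I)`, and the final states are the subsets
intersecting the final states of `N`. -/
def subsetTCDFA {α σ : Type} (N : εNFA α σ) : DFA α (Set σ) where
  step := fun S a => N.stepSet S a ∪ N.εClosure N.start
  start := N.εClosure N.start
  accept := {S | ∃ q ∈ S, q ∈ N.accept}

/-!
Re-injecting `ε(I)` after every letter restarts `N` at each position, so after reading `x`
the DFA sits in the union of the subsets the standard construction reaches on the suffixes
of `x`. It therefore accepts `x` iff some suffix of `x` lies in `L(N)`, i.e. iff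
`x ∈ Σ* · L(N)`.
-/

section

variable {α σ : Type} (N : εNFA α σ)

theorem mem_subsetTCDFA_eval_iff {s : σ} {x : List α} :
    s ∈ (subsetTCDFA N).eval x ↔ ∃ y, y <:+ x ∧ s ∈ N.eval y := by
  induction x using List.reverseRecOn generalizing s with
  | nil => simp [subsetTCDFA, εNFA.eval, εNFA.evalFrom]
  | append_singleton x a ih =>
    rw [DFA.eval_append_singleton]
    change s ∈ N.stepSet ((subsetTCDFA N).eval x) a ∪ N.εClosure N.start ↔ _
    simp only [Set.mem_union, εNFA.mem_stepSet_iff, ih, List.suffix_concat_iff]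
    constructor
    · rintro (⟨t, ⟨y, hyx, hty⟩, hs⟩ | hs)
      · refine ⟨y ++ [a], Or.inr ⟨y, rfl, hyx⟩, ?_⟩
        rw [εNFA.eval_append_singleton, εNFA.mem_stepSet_iff]
        exact ⟨t, hty, hs⟩
      · exact ⟨[], Or.inl rfl, hs⟩
    · rintro ⟨_, rfl | ⟨y, rfl, hyx⟩, hs⟩
      · exact Or.inr hs
      · rw [εNFA.eval_append_singleton, εNFA.mem_stepSet_iff] at hs
        obtain ⟨t, hty, hs⟩ := hs
        exact Or.inl ⟨t, ⟨y, hyx, hty⟩, hs⟩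

theorem subsetTCDFA_accepts : (subsetTCDFA N).accepts = (⊤ : Language α) * N.accepts := by
  ext x
  rw [DFA.mem_accepts, Language.mem_mul]
  constructor
  · rintro ⟨q, hq, hqF⟩
    obtain ⟨y, ⟨z, rfl⟩, hqy⟩ := (mem_subsetTCDFA_eval_iff N).1 hq
    exact ⟨z, trivial, y, ⟨q, hqF, hqy⟩, rfl⟩
  · rintro ⟨z, -, y, ⟨q, hqF, hqy⟩, rfl⟩
    exact ⟨q, (mem_subsetTCDFA_eval_iff N).2 ⟨y, ⟨z, rfl⟩, hqy⟩, hqF⟩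

end

/-- Applying `subsetTC` to an NFA `N` for the regexp `e` yields a DFA
accepting exactly `Σ* · L(e)` — i.e. it is equivalent to applying the standard subset
construction to the NFA for `(σ₁ + … + σₙ)* · e`. -/
theorem stmt17 {α σ : Type} (N : εNFA α σ) (e : RegularExpression α)
    (h : N.accepts = e.matches') :
    (subsetTCDFA N).accepts = (⊤ : Language α) * e.matches' := by
  rw [← h, subsetTCDFA_accepts]
end
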